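/- arXiv:2409.01896 — 2 statements merged into one kernel-verified Lean document; each statement's English description precedes it below -/
import Mathlib

section
/- (Reduced Hautus test.) Let (A,B) be a controllable pair with A ∈ ℝ^{n×n}, B ∈ ℝ^{n×m}, and let T > 0. Set A_{d,T} = e^{AT}, Ã_T = ∫₀ᵀ e^{Aτ}dτ, B_{d,T} = Ã_T B, B_{i,T} = A_{d,T}B. Then (A_{d,T}, [B_{d,T}, B_{i,T}]) is controllable if and only if for every μ in the set S := {λ ∈ σ(A) : ∃ ℓ ∈ ℤ and γ ∈ σ(A)\{λ} with (λ-γ)T = 2iπℓ}, the kernel of the stacked matrix [A_{d,T}ᵀ - e^{μT}I ; (Ã_T B)ᵀ ; Bᵀ] is {0}. -/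
open Matrix

/-- Controllability matrix `[G, FG, ..., F^{n-1}G]` of a discrete pair `(F,G)`,
with columns indexed by `Fin n × J`. -/
noncomputable def ctrbMat {n : ℕ} {J : Type*} [Fintype J]
    (F : Matrix (Fin n) (Fin n) ℝ) (G : Matrix (Fin n) J ℝ) :
    Matrix (Fin n) (Fin n × J) ℝ :=
  Matrix.of fun i p => (F ^ (p.1 : ℕ) * G) i p.2

/-- `(F,G)` is controllable iff its controllability matrix has full row rank. -/
def Controllable {n : ℕ} {J : Type*} [Fintype J]
    (F : Matrix (Fin n) (Fin n) ℝ) (G : Matrix (Fin n) J ℝ) : Prop :=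
  (ctrbMat F G).rank = n

/-- Entrywise integral `Ã_T = ∫₀ᵀ e^{Aτ} dτ`. -/
noncomputable def intExp {n : ℕ} (A : Matrix (Fin n) (Fin n) ℝ) (T : ℝ) :
    Matrix (Fin n) (Fin n) ℝ :=
  Matrix.of fun i j => ∫ τ in (0:ℝ)..T, NormedSpace.exp (τ • A) i j

namespace RH

variable {n m : ℕ} {J : Type*} [Fintype J]

noncomputable def cmap {I J : Type*} (M : Matrix I J ℝ) : Matrix I J ℂ :=
  M.map Complex.ofReal

lemma cmap_mul {I J K : Type*} [Fintype J] (M : Matrix I J ℝ) (N : Matrix J K ℝ) :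
    cmap (M * N) = cmap M * cmap N := by
  ext i k
  simp [cmap, Matrix.map_apply, Matrix.mul_apply]

lemma cmap_pow (M : Matrix (Fin n) (Fin n) ℝ) (k : ℕ) :
    cmap (M ^ k) = cmap M ^ k := by
  induction k with
  | zero =>
      ext i j
      simp only [pow_zero, cmap, Matrix.map_apply, Matrix.one_apply]
      split <;> simp_all
  | succ k ih => rw [pow_succ, pow_succ, cmap_mul, ih]

lemma cmap_transpose {I J : Type*} (M : Matrix I J ℝ) : cmap Mᵀ = (cmap M)ᵀ := rfl

lemma rank_eq_iff_inj {J : Type*} [Fintype J] (M : Matrix (Fin n) J ℝ) :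
    M.rank = n ↔ ∀ x : Fin n → ℝ, Mᵀ.mulVec x = 0 → x = 0 := by
  rw [← Matrix.rank_transpose]
  have h := LinearMap.finrank_range_add_finrank_ker Mᵀ.mulVecLin
  rw [Module.finrank_fintype_fun_eq_card, Fintype.card_fin] at h
  unfold Matrix.rank
  constructor
  · intro hr x hx
    have hk : Module.finrank ℝ (LinearMap.ker Mᵀ.mulVecLin) = 0 := by omega
    rw [Submodule.finrank_eq_zero] at hk
    have : x ∈ LinearMap.ker Mᵀ.mulVecLin := by
      simp only [LinearMap.mem_ker, Matrix.mulVecLin_apply]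
      rw [Matrix.mulVec_transpose] at hx ⊢; exact hx
    rw [hk, Submodule.mem_bot] at this; exact this
  · intro hinj
    have hk : LinearMap.ker Mᵀ.mulVecLin = ⊥ := by
      rw [LinearMap.ker_eq_bot']
      intro x hx
      exact hinj x (by simpa [Matrix.mulVecLin_apply, Matrix.mulVec_transpose] using hx)
    rw [hk] at h
    simpa using h

lemma inj_complexify {J : Type*} [Fintype J] (M : Matrix (Fin n) J ℝ) :
    (∀ x : Fin n → ℝ, Mᵀ.mulVec x = 0 → x = 0) ↔
    (∀ x : Fin n → ℂ, ((M.map Complex.ofReal)ᵀ).mulVec x = 0 → x = 0) := by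
  constructor
  · intro h x hx
    have key : ∀ j, ∑ i, (M i j : ℂ) * x i = 0 := by
      intro j
      have := congrFun hx j
      simpa [Matrix.mulVec, dotProduct, Matrix.transpose_apply, Matrix.map_apply] using this
    have hre : (fun i => (x i).re) = 0 := by
      apply h
      funext j
      have := congrArg Complex.re (key j)
      simpa [Complex.re_sum, Matrix.mulVec, dotProduct, Matrix.transpose_apply] using this
    have him : (fun i => (x i).im) = 0 := by
      apply h
      funext j
      have := congrArg Complex.im (key j)
      simpa [Complex.im_sum, Matrix.mulVec, dotProduct, Matrix.transpose_apply] using this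
    funext i
    have h1 := congrFun hre i
    have h2 := congrFun him i
    simp only [Pi.zero_apply] at h1 h2 ⊢
    exact Complex.ext h1 h2
  · intro h x hx
    have : (fun i => (x i : ℂ)) = 0 := by
      apply h
      funext j
      have := congrFun hx j
      simp only [Pi.zero_apply] at this ⊢
      simp only [Matrix.mulVec, dotProduct, Matrix.transpose_apply, Matrix.map_apply] at this ⊢
      exact_mod_cast congrArg (Complex.ofReal) this
    funext i
    have := congrFun this i
    simpa using this

/-- controllability in complexified left-kernel form -/
lemma controllable_iff_ckernel (F : Matrix (Fin n) (Fin n) ℝ) (G : Matrix (Fin n) J ℝ) :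
    Controllable F G ↔
      (∀ x : Fin n → ℂ, ((ctrbMat F G).map Complex.ofReal)ᵀ.mulVec x = 0 → x = 0) := by
  rw [Controllable, rank_eq_iff_inj, inj_complexify]

lemma pow_mulVec_eig (F : Matrix (Fin n) (Fin n) ℂ) (c : ℂ) (x : Fin n → ℂ)
    (hx : F.mulVec x = c • x) (k : ℕ) : (F ^ k).mulVec x = c ^ k • x := by
  induction k with
  | zero => simp
  | succ k ih =>
      rw [pow_succ, ← Matrix.mulVec_mulVec, hx, Matrix.mulVec_smul, ih,
        smul_smul, pow_succ, mul_comm]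

lemma ctrb_entry (F : Matrix (Fin n) (Fin n) ℝ) (G : Matrix (Fin n) J ℝ)
    (x : Fin n → ℂ) (k : Fin n) (j : J) :
    ((ctrbMat F G).map Complex.ofReal)ᵀ.mulVec x (k, j) =
      (cmap G)ᵀ.mulVec (((cmap F)ᵀ ^ (k : ℕ)).mulVec x) j := by
  have h1 : ((cmap F)ᵀ) ^ (k : ℕ) = (cmap (F ^ (k : ℕ)))ᵀ := by
    rw [cmap_pow, Matrix.transpose_pow]
  rw [h1, Matrix.mulVec_mulVec, ← Matrix.transpose_mul, ← cmap_mul]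
  simp [ctrbMat, cmap, Matrix.mulVec, dotProduct, Matrix.map_apply]

lemma hautus_easy (F : Matrix (Fin n) (Fin n) ℝ) (G : Matrix (Fin n) J ℝ)
    (h : Controllable F G)
    (c : ℂ) (x : Fin n → ℂ) (h1 : (cmap F)ᵀ.mulVec x = c • x)
    (h2 : (cmap G)ᵀ.mulVec x = 0) : x = 0 := by
  rw [controllable_iff_ckernel] at h
  apply h
  funext p
  obtain ⟨k, j⟩ := p
  rw [ctrb_entry, pow_mulVec_eig _ _ _ h1, Matrix.mulVec_smul, h2]
  simp

lemma sum_mulVec {ι : Type*} (s : Finset ι) (M : ι → Matrix (Fin n) (Fin n) ℂ) (v : Fin n → ℂ) :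
    (∑ i ∈ s, M i).mulVec v = ∑ i ∈ s, (M i).mulVec v := by
  classical
  induction s using Finset.induction_on with
  | empty => simp [Matrix.zero_mulVec]
  | insert _ _ h ih => rw [Finset.sum_insert h, Finset.sum_insert h, Matrix.add_mulVec, ih]

/-- Cayley-Hamilton, solved for the top power, transposed, applied to a vector. -/
lemma ch_pow (Fc : Matrix (Fin n) (Fin n) ℂ) (v : Fin n → ℂ) :
    (Fcᵀ ^ n).mulVec v
      = -∑ i ∈ Finset.range n, Fc.charpoly.coeff i • ((Fcᵀ ^ i).mulVec v) := by
  have hch := Matrix.aeval_self_charpoly Fc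
  rw [Polynomial.aeval_eq_sum_range] at hch
  by_cases hn : n = 0
  · subst hn
    funext i; exact absurd i.2 (by simp)
  have hdeg : Fc.charpoly.natDegree = n := by
    simpa using Fc.charpoly_natDegree_eq_dim
  rw [hdeg, Finset.sum_range_succ] at hch
  have hcoef : Fc.charpoly.coeff Fc.charpoly.natDegree = 1 := Fc.charpoly_monic.coeff_natDegree
  rw [hdeg] at hcoef
  rw [hcoef, one_smul] at hch
  have hFn : Fc ^ n = -∑ i ∈ Finset.range n, Fc.charpoly.coeff i • Fc ^ i := by
    linear_combination (norm := abel) hch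
  have hFTn : Fcᵀ ^ n = -∑ i ∈ Finset.range n, Fc.charpoly.coeff i • Fcᵀ ^ i := by
    calc Fcᵀ ^ n = (Fc ^ n)ᵀ := (Matrix.transpose_pow _ _).symm
    _ = (-∑ i ∈ Finset.range n, Fc.charpoly.coeff i • Fc ^ i)ᵀ := by rw [hFn]
    _ = -∑ i ∈ Finset.range n, Fc.charpoly.coeff i • Fcᵀ ^ i := by
        rw [Matrix.transpose_neg, Matrix.transpose_sum]
        congr 1
        refine Finset.sum_congr rfl fun i _ => ?_
        rw [Matrix.transpose_smul, Matrix.transpose_pow]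
  rw [hFTn, Matrix.neg_mulVec, sum_mulVec]
  congr 1
  refine Finset.sum_congr rfl fun i _ => ?_
  rw [Matrix.smul_mulVec]
lemma mulVec_sumv {ι : Type*} {I K : Type*} [Fintype K] (s : Finset ι)
    (M : Matrix I K ℂ) (v : ι → K → ℂ) :
    M.mulVec (∑ i ∈ s, v i) = ∑ i ∈ s, M.mulVec (v i) := by
  classical
  induction s using Finset.induction_on with
  | empty => simp
  | insert _ _ h ih => rw [Finset.sum_insert h, Finset.sum_insert h, Matrix.mulVec_add, ih]

lemma hautus_hard (F : Matrix (Fin n) (Fin n) ℝ) (G : Matrix (Fin n) J ℝ)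
    (x₀ : Fin n → ℂ) (hx₀ : x₀ ≠ 0)
    (hker : ((ctrbMat F G).map Complex.ofReal)ᵀ.mulVec x₀ = 0) :
    ∃ (z : ℂ) (x : Fin n → ℂ), x ≠ 0 ∧ (cmap F)ᵀ.mulVec x = z • x ∧
      (cmap G)ᵀ.mulVec x = 0 := by
  classical
  set Fc := (cmap F)ᵀ with hFc
  set Gc := (cmap G)ᵀ with hGc
  -- the subspace of left-uncontrollable directions
  let V : Submodule ℂ (Fin n → ℂ) :=
    { carrier := {x | ∀ k : ℕ, Gc.mulVec ((Fc ^ k).mulVec x) = 0}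
      add_mem' := fun {a b} ha hb k => by
        rw [Matrix.mulVec_add, Matrix.mulVec_add, ha k, hb k, add_zero]
      zero_mem' := fun k => by simp
      smul_mem' := fun c a ha k => by
        rw [Matrix.mulVec_smul, Matrix.mulVec_smul, ha k, smul_zero] }
  have hmemV : ∀ x, x ∈ V ↔ ∀ k : ℕ, Gc.mulVec ((Fc ^ k).mulVec x) = 0 := fun _ => Iff.rfl
  -- x₀ ∈ V
  have hx₀V : x₀ ∈ V := by
    rw [hmemV]
    intro k
    induction k using Nat.strong_induction_on with
    | _ k ih =>
      by_cases hk : k < n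
      · funext j
        have := congrFun hker (⟨k, hk⟩, j)
        rw [ctrb_entry] at this
        simpa using this
      · push_neg at hk
        obtain ⟨d, rfl⟩ : ∃ d, k = d + n := ⟨k - n, by omega⟩
        have h1 : Fc ^ (d + n) *ᵥ x₀
            = -∑ i ∈ Finset.range n, (cmap F).charpoly.coeff i • (Fc ^ (d + i) *ᵥ x₀) := by
          rw [pow_add, ← Matrix.mulVec_mulVec]
          rw [show Fc ^ n = (cmap F)ᵀ ^ n from rfl, ch_pow (cmap F) x₀]
          rw [Matrix.mulVec_neg, mulVec_sumv]
          congr 1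
          refine Finset.sum_congr rfl fun i _ => ?_
          rw [Matrix.mulVec_smul, Matrix.mulVec_mulVec, ← pow_add]
        rw [h1, Matrix.mulVec_neg, mulVec_sumv, neg_eq_zero]
        apply Finset.sum_eq_zero
        intro i hi
        rw [Matrix.mulVec_smul, ih (d + i) (by simp at hi; omega), smul_zero]
  -- V is nontrivial
  have : Nontrivial V := by
    refine nontrivial_of_ne ⟨x₀, hx₀V⟩ 0 ?_
    simp only [ne_eq, Submodule.mk_eq_zero]
    exact hx₀
  -- V is invariant under Fc
  have hInv : ∀ x ∈ V, Fc.mulVecLin x ∈ V := by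
    intro x hx
    rw [hmemV] at hx ⊢
    intro k
    have h2 : Fc ^ k *ᵥ (Fc *ᵥ x) = Fc ^ (k + 1) *ᵥ x := by
      rw [Matrix.mulVec_mulVec, ← pow_succ]
    rw [Matrix.mulVecLin_apply, h2]
    exact hx (k + 1)
  obtain ⟨c, hc⟩ := Module.End.exists_eigenvalue (Fc.mulVecLin.restrict hInv)
  obtain ⟨y, hy⟩ := hc.exists_hasEigenvector
  refine ⟨c, y.val, ?_, ?_, ?_⟩
  · intro hy0
    exact hy.right (Subtype.ext hy0)
  · have := hy.apply_eq_smul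
    have h2 := congrArg Subtype.val this
    rw [LinearMap.restrict_apply] at h2
    simpa [Matrix.mulVecLin_apply] using h2
  · have := (hmemV _).mp y.2 0
    simpa using this
lemma exp_cmap (M : Matrix (Fin n) (Fin n) ℝ) :
    (NormedSpace.exp M).map Complex.ofReal
      = NormedSpace.exp (M.map Complex.ofReal) := by
  letI : SeminormedRing (Matrix (Fin n) (Fin n) ℝ) := Matrix.linftyOpSemiNormedRing
  letI : NormedRing (Matrix (Fin n) (Fin n) ℝ) := Matrix.linftyOpNormedRing
  letI : NormedAlgebra ℝ (Matrix (Fin n) (Fin n) ℝ) := Matrix.linftyOpNormedAlgebra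
  letI : SeminormedRing (Matrix (Fin n) (Fin n) ℂ) := Matrix.linftyOpSemiNormedRing
  letI : NormedRing (Matrix (Fin n) (Fin n) ℂ) := Matrix.linftyOpNormedRing
  letI : NormedAlgebra ℂ (Matrix (Fin n) (Fin n) ℂ) := Matrix.linftyOpNormedAlgebra
  letI : NormedAlgebra ℝ (Matrix (Fin n) (Fin n) ℂ) := Matrix.linftyOpNormedAlgebra
  letI : NormedAlgebra ℚ (Matrix (Fin n) (Fin n) ℝ) := Matrix.linftyOpNormedAlgebra
  letI : NormedAlgebra ℚ (Matrix (Fin n) (Fin n) ℂ) := Matrix.linftyOpNormedAlgebra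
  have h1 : (Complex.ofRealHom.mapMatrix : Matrix (Fin n) (Fin n) ℝ →+* Matrix (Fin n) (Fin n) ℂ)
      (NormedSpace.exp M) = NormedSpace.exp (Complex.ofRealHom.mapMatrix M) := by
    apply NormedSpace.map_exp
    exact Continuous.matrix_map continuous_id (Complex.continuous_ofReal)
  have h2 : (NormedSpace.exp : Matrix (Fin n) (Fin n) ℂ → _) = NormedSpace.exp :=
    rfl
  exact h1
noncomputable def mvL (v : Fin n → ℂ) :
    Matrix (Fin n) (Fin n) ℂ →ₗ[ℂ] (Fin n → ℂ) where
  toFun N := N.mulVec v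
  map_add' M N := Matrix.add_mulVec _ _ _
  map_smul' c M := by simp [Matrix.smul_mulVec]

lemma exp_mulVec_eig (M : Matrix (Fin n) (Fin n) ℂ) (c : ℂ) (v : Fin n → ℂ)
    (hv : M.mulVec v = c • v) :
    (NormedSpace.exp M).mulVec v = Complex.exp c • v := by
  letI : SeminormedRing (Matrix (Fin n) (Fin n) ℂ) := Matrix.linftyOpSemiNormedRing
  letI : NormedRing (Matrix (Fin n) (Fin n) ℂ) := Matrix.linftyOpNormedRing
  letI : NormedAlgebra ℂ (Matrix (Fin n) (Fin n) ℂ) := Matrix.linftyOpNormedAlgebra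
  have hsum : Summable fun k : ℕ => (k.factorial⁻¹ : ℂ) • M ^ k :=
    NormedSpace.expSeries_summable' (𝕂 := ℂ) M
  have hpow : ∀ k : ℕ, (M ^ k).mulVec v = c ^ k • v := by
    intro k
    induction k with
    | zero => simp
    | succ k ih =>
        rw [pow_succ, ← Matrix.mulVec_mulVec, hv, Matrix.mulVec_smul, ih, smul_smul,
          pow_succ, mul_comm]
  have hL := ((mvL v).toContinuousLinearMap.hasSum hsum.hasSum).tsum_eq
  rw [NormedSpace.exp_eq_tsum ℂ]
  have : ((mvL v).toContinuousLinearMap) (∑' k : ℕ, (k.factorial⁻¹ : ℂ) • M ^ k)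
      = ∑' k : ℕ, ((mvL v).toContinuousLinearMap) ((k.factorial⁻¹ : ℂ) • M ^ k) := hL.symm
  have hterm : ∀ k : ℕ, ((mvL v).toContinuousLinearMap) ((k.factorial⁻¹ : ℂ) • M ^ k)
      = ((k.factorial⁻¹ : ℂ) * c ^ k) • v := by
    intro k
    show (mvL v) ((k.factorial⁻¹ : ℂ) • M ^ k) = _
    rw [LinearMap.map_smul]
    show (k.factorial⁻¹ : ℂ) • (M ^ k).mulVec v = _
    rw [hpow k, smul_smul]
  have hscal : Summable fun k : ℕ => (k.factorial⁻¹ : ℂ) * c ^ k := by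
    simpa [smul_eq_mul] using NormedSpace.expSeries_summable' (𝕂 := ℂ) c
  calc (∑' k : ℕ, (k.factorial⁻¹ : ℂ) • M ^ k).mulVec v
      = ((mvL v).toContinuousLinearMap) (∑' k : ℕ, (k.factorial⁻¹ : ℂ) • M ^ k) := by
        simp only [LinearMap.coe_toContinuousLinearMap']; rfl
    _ = ∑' k : ℕ, ((mvL v).toContinuousLinearMap) ((k.factorial⁻¹ : ℂ) • M ^ k) := this
    _ = ∑' k : ℕ, ((k.factorial⁻¹ : ℂ) * c ^ k) • v := by simp only [hterm]
    _ = (∑' k : ℕ, (k.factorial⁻¹ : ℂ) * c ^ k) • v := Summable.tsum_smul_const hscal v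
    _ = Complex.exp c • v := by
        congr 1
        rw [Complex.exp_eq_exp_ℂ, NormedSpace.exp_eq_tsum ℂ]
        simp [smul_eq_mul]
lemma exp_mulVec_jordan (M : Matrix (Fin n) (Fin n) ℂ) (c : ℂ) (w v : Fin n → ℂ)
    (hw : M.mulVec w = c • w + v) (hv : M.mulVec v = c • v) :
    (NormedSpace.exp M).mulVec w = Complex.exp c • w + Complex.exp c • v := by
  letI : SeminormedRing (Matrix (Fin n) (Fin n) ℂ) := Matrix.linftyOpSemiNormedRing
  letI : NormedRing (Matrix (Fin n) (Fin n) ℂ) := Matrix.linftyOpNormedRing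
  letI : NormedAlgebra ℂ (Matrix (Fin n) (Fin n) ℂ) := Matrix.linftyOpNormedAlgebra
  have hsum : Summable fun k : ℕ => (k.factorial⁻¹ : ℂ) • M ^ k :=
    NormedSpace.expSeries_summable' (𝕂 := ℂ) M
  set s : ℕ → ℂ := fun k => (k.factorial⁻¹ : ℂ) * ((k : ℂ) * c ^ (k - 1)) with hs
  have hs0 : s 0 = 0 := by simp [hs]
  have hsucc : ∀ k : ℕ, s (k + 1) = (k.factorial⁻¹ : ℂ) * c ^ k := by
    intro k
    have hkf : ((k + 1).factorial : ℂ) = (k + 1) * k.factorial := by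
      rw [Nat.factorial_succ]; push_cast; ring
    have hne : ((k:ℂ) + 1) ≠ 0 := Nat.cast_add_one_ne_zero k
    have hfne : ((k.factorial : ℂ)) ≠ 0 := by
      exact_mod_cast Nat.cast_ne_zero.mpr k.factorial_ne_zero
    simp only [hs, Nat.add_sub_cancel]
    rw [hkf]
    push_cast
    field_simp
  have hscal : Summable fun k : ℕ => (k.factorial⁻¹ : ℂ) * c ^ k := by
    simpa [smul_eq_mul] using NormedSpace.expSeries_summable' (𝕂 := ℂ) c
  have hssum : Summable s := by
    rw [← summable_nat_add_iff 1]
    exact hscal.congr fun k => (hsucc k).symm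
  have hstsum : ∑' k, s k = Complex.exp c := by
    rw [Summable.tsum_eq_zero_add hssum, hs0, zero_add]
    rw [Complex.exp_eq_exp_ℂ, NormedSpace.exp_eq_tsum ℂ]
    simp only [smul_eq_mul]
    exact tsum_congr fun k => hsucc k
  have hpow : ∀ k : ℕ, (M ^ k).mulVec w = c ^ k • w + ((k : ℂ) * c ^ (k - 1)) • v := by
    intro k
    induction k with
    | zero => simp
    | succ k ih =>
        rw [pow_succ', ← Matrix.mulVec_mulVec, ih, Matrix.mulVec_add, Matrix.mulVec_smul,
          Matrix.mulVec_smul, hw, hv]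
        cases k with
        | zero => simp
        | succ j =>
            simp only [Nat.add_sub_cancel]
            push_cast
            match_scalars <;> ring
  -- now sum up
  have hsw : Summable fun k : ℕ => ((k.factorial⁻¹ : ℂ) * c ^ k) • w :=
    hscal.smul_const w
  have hsv : Summable fun k : ℕ => s k • v := hssum.smul_const v
  have hL := (((mvL w).toContinuousLinearMap).hasSum hsum.hasSum).tsum_eq
  have hterm : ∀ k : ℕ, ((mvL w).toContinuousLinearMap) ((k.factorial⁻¹ : ℂ) • M ^ k)
      = ((k.factorial⁻¹ : ℂ) * c ^ k) • w + s k • v := by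
    intro k
    show (mvL w) ((k.factorial⁻¹ : ℂ) • M ^ k) = _
    rw [LinearMap.map_smul]
    show (k.factorial⁻¹ : ℂ) • (M ^ k).mulVec w = _
    rw [hpow k, smul_add, smul_smul, smul_smul, hs]
  calc (NormedSpace.exp M).mulVec w
      = ((mvL w).toContinuousLinearMap) (∑' k : ℕ, (k.factorial⁻¹ : ℂ) • M ^ k) := by
        rw [NormedSpace.exp_eq_tsum ℂ]
        simp only [LinearMap.coe_toContinuousLinearMap']
        rfl
    _ = ∑' k : ℕ, ((mvL w).toContinuousLinearMap) ((k.factorial⁻¹ : ℂ) • M ^ k) := hL.symm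
    _ = ∑' k : ℕ, (((k.factorial⁻¹ : ℂ) * c ^ k) • w + s k • v) := tsum_congr hterm
    _ = (∑' k : ℕ, ((k.factorial⁻¹ : ℂ) * c ^ k) • w) + ∑' k : ℕ, s k • v :=
        Summable.tsum_add hsw hsv
    _ = (∑' k : ℕ, (k.factorial⁻¹ : ℂ) * c ^ k) • w + (∑' k, s k) • v := by
        rw [Summable.tsum_smul_const hscal, Summable.tsum_smul_const hssum]
    _ = Complex.exp c • w + Complex.exp c • v := by
        rw [hstsum]
        congr 2
        rw [Complex.exp_eq_exp_ℂ, NormedSpace.exp_eq_tsum ℂ]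
        simp [smul_eq_mul]
lemma mem_spectrum_of_eig (M : Matrix (Fin n) (Fin n) ℂ) (c : ℂ) (x : Fin n → ℂ)
    (hx : x ≠ 0) (h : Mᵀ.mulVec x = c • x) : c ∈ spectrum ℂ M := by
  rw [spectrum.mem_iff]
  intro hu
  have hdet : IsUnit (algebraMap ℂ (Matrix (Fin n) (Fin n) ℂ) c - M).det :=
    (Matrix.isUnit_iff_isUnit_det _).mp hu
  have hdetT : IsUnit (algebraMap ℂ (Matrix (Fin n) (Fin n) ℂ) c - Mᵀ).det := by
    have : (algebraMap ℂ (Matrix (Fin n) (Fin n) ℂ) c - Mᵀ) =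
        (algebraMap ℂ (Matrix (Fin n) (Fin n) ℂ) c - M)ᵀ := by
      rw [Matrix.transpose_sub]
      congr 1
      simp [Matrix.algebraMap_eq_diagonal]
    rw [this, Matrix.det_transpose]
    exact hdet
  set P := algebraMap ℂ (Matrix (Fin n) (Fin n) ℂ) c - Mᵀ with hP
  have hPx : P.mulVec x = 0 := by
    rw [hP, Matrix.sub_mulVec, Algebra.algebraMap_eq_smul_one,
      Matrix.smul_mulVec, Matrix.one_mulVec, h, sub_self]
  have : x = 0 := by
    have h1 : (P⁻¹ * P).mulVec x = x := by
      rw [Matrix.nonsing_inv_mul P hdetT, Matrix.one_mulVec]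
    rw [← Matrix.mulVec_mulVec, hPx, Matrix.mulVec_zero] at h1
    exact h1.symm
  exact hx this

lemma exp_eig_exists (Ac : Matrix (Fin n) (Fin n) ℂ) (T : ℝ) (z : ℂ) (x : Fin n → ℂ)
    (hx0 : x ≠ 0)
    (hx : (NormedSpace.exp ((T:ℂ) • Acᵀ)).mulVec x = z • x) :
    ∃ μ ∈ spectrum ℂ Ac, z = Complex.exp (μ * T) := by
  classical
  set E := NormedSpace.exp ((T:ℂ) • Acᵀ) with hE
  have hcomm : Acᵀ * E = E * Acᵀ := by
    letI : SeminormedRing (Matrix (Fin n) (Fin n) ℂ) := Matrix.linftyOpSemiNormedRing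
    letI : NormedRing (Matrix (Fin n) (Fin n) ℂ) := Matrix.linftyOpNormedRing
    letI : NormedAlgebra ℂ (Matrix (Fin n) (Fin n) ℂ) := Matrix.linftyOpNormedAlgebra
    exact (Commute.exp_right (Commute.smul_right (Commute.refl _) (T:ℂ))).eq
  set U : Submodule ℂ (Fin n → ℂ) :=
    { carrier := {v | E.mulVec v = z • v}
      add_mem' := fun {a b} ha hb => by
        simp only [Set.mem_setOf_eq] at *
        rw [Matrix.mulVec_add, ha, hb, smul_add]
      zero_mem' := by simp
      smul_mem' := fun r a ha => by
        simp only [Set.mem_setOf_eq] at *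
        rw [Matrix.mulVec_smul, ha, smul_comm] } with hU
  have hmemU : ∀ v, v ∈ U ↔ E.mulVec v = z • v := fun _ => Iff.rfl
  have hxU : x ∈ U := hx
  have : Nontrivial U := by
    refine nontrivial_of_ne ⟨x, hxU⟩ 0 ?_
    simp only [ne_eq, Submodule.mk_eq_zero]
    exact hx0
  have hInv : ∀ v ∈ U, (Acᵀ).mulVecLin v ∈ U := by
    intro v hv
    rw [hmemU] at hv ⊢
    rw [Matrix.mulVecLin_apply, Matrix.mulVec_mulVec, ← hcomm, ← Matrix.mulVec_mulVec,
      hv, Matrix.mulVec_smul]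
  obtain ⟨lam, hlam⟩ := Module.End.exists_eigenvalue ((Acᵀ).mulVecLin.restrict hInv)
  obtain ⟨y, hy⟩ := hlam.exists_hasEigenvector
  have hyval : Acᵀ.mulVec y.val = lam • y.val := by
    have := hy.apply_eq_smul
    have h2 := congrArg Subtype.val this
    simp only [LinearMap.restrict_apply, Matrix.mulVecLin_apply] at h2
    exact h2
  have hyne : (y.val : Fin n → ℂ) ≠ 0 := fun h0 => hy.right (Subtype.ext h0)
  have hMy : ((T:ℂ) • Acᵀ).mulVec y.val = ((T:ℂ) * lam) • y.val := by
    rw [Matrix.smul_mulVec, hyval, smul_smul]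
  have hEy := exp_mulVec_eig ((T:ℂ) • Acᵀ) ((T:ℂ) * lam) y.val hMy
  have hEy2 : E.mulVec y.val = z • y.val := (hmemU _).mp y.2
  have hzz : Complex.exp ((T:ℂ) * lam) = z := by
    have : (Complex.exp ((T:ℂ) * lam) - z) • (y.val : Fin n → ℂ) = 0 := by
      rw [sub_smul, ← hEy, ← hEy2, hE, sub_self]
    rcases smul_eq_zero.mp this with h | h
    · exact sub_eq_zero.mp h
    · exact absurd h hyne
  exact ⟨lam, mem_spectrum_of_eig Ac lam y.val hyne hyval, by rw [← hzz, mul_comm]⟩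
set_option maxHeartbeats 1000000 in
lemma ker_exp_eig (Ac : Matrix (Fin n) (Fin n) ℂ) {T : ℝ} (hT : T ≠ 0) (μ : ℂ)
    (halias : ∀ lam ∈ spectrum ℂ Ac, Complex.exp (lam * T) = Complex.exp (μ * T) → lam = μ)
    (x : Fin n → ℂ)
    (hx : (NormedSpace.exp ((T:ℂ) • Acᵀ)).mulVec x = Complex.exp (μ * T) • x) :
    Acᵀ.mulVec x = μ • x := by
  classical
  by_cases hx0 : x = 0
  · subst hx0; simp
  set z := Complex.exp (μ * T) with hz
  set E := NormedSpace.exp ((T:ℂ) • Acᵀ) with hE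
  have hcomm : Acᵀ * E = E * Acᵀ := by
    letI : SeminormedRing (Matrix (Fin n) (Fin n) ℂ) := Matrix.linftyOpSemiNormedRing
    letI : NormedRing (Matrix (Fin n) (Fin n) ℂ) := Matrix.linftyOpNormedRing
    letI : NormedAlgebra ℂ (Matrix (Fin n) (Fin n) ℂ) := Matrix.linftyOpNormedAlgebra
    exact (Commute.exp_right (Commute.smul_right (Commute.refl _) (T:ℂ))).eq
  set U : Submodule ℂ (Fin n → ℂ) :=
    { carrier := {v | E.mulVec v = z • v}
      add_mem' := fun {a b} ha hb => by
        simp only [Set.mem_setOf_eq] at *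
        rw [Matrix.mulVec_add, ha, hb, smul_add]
      zero_mem' := by simp
      smul_mem' := fun r a ha => by
        simp only [Set.mem_setOf_eq] at *
        rw [Matrix.mulVec_smul, ha, smul_comm] } with hU
  have hmemU : ∀ v, v ∈ U ↔ E.mulVec v = z • v := fun _ => Iff.rfl
  have hxU : x ∈ U := hx
  have hInv : ∀ v ∈ U, (Acᵀ).mulVecLin v ∈ U := by
    intro v hv
    rw [hmemU] at hv ⊢
    rw [Matrix.mulVecLin_apply, Matrix.mulVec_mulVec, ← hcomm, ← Matrix.mulVec_mulVec,
      hv, Matrix.mulVec_smul]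
  set fU := (Acᵀ).mulVecLin.restrict hInv with hfU
  -- all eigenvalues of fU equal μ
  have heig : ∀ lam, Module.End.HasEigenvalue fU lam → lam = μ := by
    intro lam hlam
    obtain ⟨y, hy⟩ := hlam.exists_hasEigenvector
    have hyval : Acᵀ.mulVec y.val = lam • y.val := by
      have h2 := congrArg Subtype.val hy.apply_eq_smul
      simp only [hfU, LinearMap.restrict_apply, Matrix.mulVecLin_apply] at h2
      exact h2
    have hyne : (y.val : Fin n → ℂ) ≠ 0 := fun h0 => hy.right (Subtype.ext h0)
    have hMy : ((T:ℂ) • Acᵀ).mulVec y.val = ((T:ℂ) * lam) • y.val := by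
      rw [Matrix.smul_mulVec, hyval, smul_smul]
    have hEy := exp_mulVec_eig ((T:ℂ) • Acᵀ) ((T:ℂ) * lam) y.val hMy
    have hEy2 : E.mulVec y.val = z • y.val := (hmemU _).mp y.2
    have hzz : Complex.exp ((T:ℂ) * lam) = z := by
      have h3 : (Complex.exp ((T:ℂ) * lam) - z) • (y.val : Fin n → ℂ) = 0 := by
        rw [sub_smul, ← hEy, ← hEy2, hE, sub_self]
      rcases smul_eq_zero.mp h3 with h | h
      · exact sub_eq_zero.mp h
      · exact absurd h hyne
    exact halias lam (mem_spectrum_of_eig Ac lam y.val hyne hyval)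
      (by rw [← hzz, mul_comm])
  -- minimal polynomial of fU is (X - μ)^d
  have hint : IsIntegral ℂ fU := Algebra.IsIntegral.isIntegral (R := ℂ) fU
  have hmono := minpoly.monic hint
  set P := minpoly ℂ fU with hPdef
  have hsplit : P.Splits := IsAlgClosed.splits P
  have hroots : ∀ r ∈ P.roots, r = μ := fun r hr =>
    heig r (Module.End.hasEigenvalue_of_isRoot (Polynomial.isRoot_of_mem_roots hr))
  have hcard : Multiset.card P.roots = P.natDegree :=
    Polynomial.splits_iff_card_roots.mp hsplit
  have hP : P = (Polynomial.X - Polynomial.C μ) ^ P.natDegree := by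
    conv_lhs => rw [hsplit.eq_prod_roots_of_monic hmono]
    rw [show P.roots = Multiset.replicate P.natDegree μ from
      Multiset.eq_replicate.mpr ⟨hcard, hroots⟩]
    rw [Multiset.map_replicate, Multiset.prod_replicate]
  have haev := minpoly.aeval ℂ fU
  rw [← hPdef, hP, map_pow] at haev
  simp only [map_sub, Polynomial.aeval_X, Polynomial.aeval_C] at haev
  set g := fU - algebraMap ℂ (Module.End ℂ U) μ with hg
  set X : U := ⟨x, hxU⟩ with hX
  have hfind : ∃ k, (g ^ k) X = 0 := ⟨P.natDegree, by rw [haev]; rfl⟩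
  set k := Nat.find hfind with hkdef
  have hk : (g ^ k) X = 0 := Nat.find_spec hfind
  have hgX : g X = 0 := by
    by_contra hgX
    have hk0 : k ≠ 0 := by
      intro h
      rw [h, pow_zero] at hk
      exact hx0 (congrArg Subtype.val hk)
    have hk1 : k ≠ 1 := by
      intro h
      rw [h, pow_one] at hk
      exact hgX hk
    have hk2 : 2 ≤ k := by omega
    set w : U := (g ^ (k - 2)) X with hw
    have hgw : g w ≠ 0 := by
      intro h0
      have h1 : (g ^ (k - 1)) X = 0 := by
        have : g ^ (k - 1) = g * g ^ (k - 2) := by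
          rw [← pow_succ']
          congr 1
          omega
        rw [this, Module.End.mul_apply, ← hw, h0]
      exact Nat.find_min hfind (show k - 1 < k by omega) h1
    have hg2w : g (g w) = 0 := by
      have : g ^ k = g * (g * g ^ (k - 2)) := by
        rw [← pow_succ', ← pow_succ']
        congr 1
        omega
      rw [this] at hk
      simpa [Module.End.mul_apply, ← hw] using hk
    -- vector translations
    have hgwval : ((g w : U) : Fin n → ℂ) = Acᵀ.mulVec w.val - μ • w.val := by
      rw [hg]
      simp only [LinearMap.sub_apply, Module.algebraMap_end_apply, Submodule.coe_sub,
        SetLike.val_smul, hfU, LinearMap.restrict_apply, Matrix.mulVecLin_apply]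
    have hv0ne : ((g w : U) : Fin n → ℂ) ≠ 0 := fun h0 => hgw (Subtype.ext h0)
    have hAw : Acᵀ.mulVec w.val = μ • w.val + ((g w : U) : Fin n → ℂ) := by
      rw [hgwval]
      abel
    have hAv : Acᵀ.mulVec ((g w : U) : Fin n → ℂ) = μ • ((g w : U) : Fin n → ℂ) := by
      have h2 := congrArg Subtype.val hg2w
      rw [hg] at h2
      simp only [LinearMap.sub_apply, Module.algebraMap_end_apply, Submodule.coe_sub,
        SetLike.val_smul, LinearMap.restrict_apply, Matrix.mulVecLin_apply,
        Submodule.coe_zero, ZeroMemClass.coe_zero] at h2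
      exact sub_eq_zero.mp h2
    have hMw : ((T:ℂ) • Acᵀ).mulVec w.val
        = (μ * (T:ℂ)) • w.val + ((T:ℂ) • ((g w : U) : Fin n → ℂ)) := by
      rw [Matrix.smul_mulVec, hAw, smul_add, smul_smul, mul_comm]
    have hMv : ((T:ℂ) • Acᵀ).mulVec ((T:ℂ) • ((g w : U) : Fin n → ℂ))
        = (μ * (T:ℂ)) • ((T:ℂ) • ((g w : U) : Fin n → ℂ)) := by
      rw [Matrix.mulVec_smul, Matrix.smul_mulVec, hAv, smul_smul, smul_smul, smul_smul]
      congr 1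
      ring
    have hjord := exp_mulVec_jordan ((T:ℂ) • Acᵀ) (μ * (T:ℂ)) w.val
      ((T:ℂ) • ((g w : U) : Fin n → ℂ)) hMw hMv
    have hwU : E.mulVec w.val = z • w.val := (hmemU _).mp w.2
    rw [← hE] at hjord
    rw [hwU, hz] at hjord
    have hzero : Complex.exp (μ * (T:ℂ)) • ((T:ℂ) • ((g w : U) : Fin n → ℂ)) = 0 := by
      have h4 := hjord.symm
      rwa [add_eq_left] at h4
    rcases smul_eq_zero.mp hzero with h | h
    · exact Complex.exp_ne_zero _ h
    · rcases smul_eq_zero.mp h with h' | h'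
      · exact hT (by exact_mod_cast h')
      · exact hv0ne h'
  -- conclude
  have h2 := congrArg Subtype.val hgX
  rw [hg] at h2
  simp only [LinearMap.sub_apply, Module.algebraMap_end_apply, Submodule.coe_sub,
    SetLike.val_smul, hfU, LinearMap.restrict_apply, Matrix.mulVecLin_apply,
    Submodule.coe_zero, ZeroMemClass.coe_zero] at h2
  exact sub_eq_zero.mp h2

lemma cmap_smul_real (A : Matrix (Fin n) (Fin n) ℝ) (T : ℝ) :
    cmap (T • A) = (T : ℂ) • cmap A := by
  ext i j
  simp [cmap, Matrix.map_apply]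

lemma cmap_fromColumns {J₁ J₂ : Type*} (C : Matrix (Fin n) J₁ ℝ) (D : Matrix (Fin n) J₂ ℝ) :
    cmap (Matrix.fromCols C D) = Matrix.fromCols (cmap C) (cmap D) := by
  ext i j
  cases j <;> simp [cmap, Matrix.map_apply, Matrix.fromCols]

lemma sub_smul_one_mulVec (M : Matrix (Fin n) (Fin n) ℂ) (c : ℂ) (x : Fin n → ℂ) :
    (M - c • 1).mulVec x = 0 ↔ M.mulVec x = c • x := by
  rw [Matrix.sub_mulVec, Matrix.smul_mulVec, Matrix.one_mulVec, sub_eq_zero]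

lemma fromColumns_kernel_split {J₁ J₂ : Type*} [Fintype J₁] [Fintype J₂]
    (C : Matrix (Fin n) J₁ ℝ) (D : Matrix (Fin n) J₂ ℝ) (x : Fin n → ℂ) :
    (cmap (Matrix.fromCols C D))ᵀ.mulVec x = 0 ↔
      ((cmap C)ᵀ.mulVec x = 0 ∧ (cmap D)ᵀ.mulVec x = 0) := by
  rw [cmap_fromColumns, Matrix.transpose_fromCols, Matrix.fromRows_mulVec]
  constructor
  · intro h
    constructor
    · funext j; exact congrFun h (Sum.inl j)
    · funext j; exact congrFun h (Sum.inr j)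
  · rintro ⟨h1, h2⟩
    funext j
    cases j with
    | inl j => exact congrFun h1 j
    | inr j => exact congrFun h2 j

end RH

set_option maxHeartbeats 1000000 in
/-- Reduced Hautus test (Theorem 1): with `(A,B)` controllable and `T > 0`,
the MRI sampled pair `(A_{d,T}, [B_{d,T}, B_{i,T}])` is controllable iff for every
`μ ∈ σ(A)` for which there are `ℓ ∈ ℤ` and `γ ∈ σ(A)\{μ}` with `(μ-γ)T = 2iπℓ`,
the kernel of `[A_{d,T}ᵀ - e^{μT}I ; (Ã_T B)ᵀ ; Bᵀ]` is trivial. -/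
theorem stmt_8 (n m : ℕ) (A : Matrix (Fin n) (Fin n) ℝ) (B : Matrix (Fin n) (Fin m) ℝ)
    (hAB : Controllable A B) (T : ℝ) (hT : 0 < T)
    (AdT : Matrix (Fin n) (Fin n) ℝ) (hAdT : AdT = NormedSpace.exp (T • A))
    (BdT : Matrix (Fin n) (Fin m) ℝ) (hBdT : BdT = intExp A T * B)
    (BiT : Matrix (Fin n) (Fin m) ℝ) (hBiT : BiT = AdT * B) :
    Controllable AdT (Matrix.fromCols BdT BiT) ↔
      ∀ μ ∈ {lam ∈ spectrum ℂ (A.map Complex.ofReal) |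
          ∃ ℓ : ℤ, ∃ γ ∈ spectrum ℂ (A.map Complex.ofReal), γ ≠ lam ∧
            (lam - γ) * (T : ℂ) = 2 * Complex.I * Real.pi * ℓ},
        ∀ x : Fin n → ℂ,
          ((AdT.map Complex.ofReal)ᵀ - Complex.exp (μ * T) • 1).mulVec x = 0 →
          ((intExp A T * B).map Complex.ofReal)ᵀ.mulVec x = 0 →
          (B.map Complex.ofReal)ᵀ.mulVec x = 0 →
          x = 0 := by
  classical
  have hE : (AdT.map Complex.ofReal)ᵀ = NormedSpace.exp ((T:ℂ) • (RH.cmap A)ᵀ) := by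
    have h1 : AdT.map Complex.ofReal = NormedSpace.exp ((T:ℂ) • RH.cmap A) := by
      rw [hAdT, RH.exp_cmap]
      congr 1
      exact RH.cmap_smul_real A T
    rw [h1, ← Matrix.exp_transpose, Matrix.transpose_smul]
  constructor
  · -- forward direction
    intro hctrl μ _hμ x h1 h2 h3
    have he : ((AdT.map Complex.ofReal)ᵀ).mulVec x = Complex.exp (μ * T) • x :=
      (RH.sub_smul_one_mulVec _ _ _).mp h1
    have hBi : ((RH.cmap BiT)ᵀ).mulVec x = 0 := by
      rw [show RH.cmap BiT = RH.cmap AdT * RH.cmap B from by rw [hBiT]; exact RH.cmap_mul _ _]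
      rw [Matrix.transpose_mul, ← Matrix.mulVec_mulVec]
      rw [show (RH.cmap AdT)ᵀ.mulVec x = Complex.exp (μ * T) • x from he]
      rw [Matrix.mulVec_smul, show (RH.cmap B)ᵀ.mulVec x = 0 from h3, smul_zero]
    have hBd : ((RH.cmap BdT)ᵀ).mulVec x = 0 := by
      rw [hBdT]; exact h2
    exact RH.hautus_easy AdT (Matrix.fromCols BdT BiT) hctrl (Complex.exp (μ * T)) x he
      ((RH.fromColumns_kernel_split BdT BiT x).mpr ⟨hBd, hBi⟩)
  · -- backward direction
    intro h
    by_contra hc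
    rw [RH.controllable_iff_ckernel] at hc
    push_neg at hc
    obtain ⟨x₀, hker, hx₀⟩ := hc
    obtain ⟨z, x, hx0, heig, hG0⟩ :=
      RH.hautus_hard AdT (Matrix.fromCols BdT BiT) x₀ hx₀ hker
    have heig' : (NormedSpace.exp ((T:ℂ) • (RH.cmap A)ᵀ)).mulVec x = z • x := by
      rw [← hE]; exact heig
    obtain ⟨μ, hμspec, hzμ⟩ := RH.exp_eig_exists (RH.cmap A) T z x hx0 heig'
    obtain ⟨hBd0, hBi0⟩ := (RH.fromColumns_kernel_split BdT BiT x).mp hG0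
    have hB0 : ((RH.cmap B)ᵀ).mulVec x = 0 := by
      rw [show RH.cmap BiT = RH.cmap AdT * RH.cmap B from by rw [hBiT]; exact RH.cmap_mul _ _]
        at hBi0
      rw [Matrix.transpose_mul, ← Matrix.mulVec_mulVec, heig, Matrix.mulVec_smul] at hBi0
      rcases smul_eq_zero.mp hBi0 with hz0 | h0
      · exact absurd (hzμ ▸ hz0) (Complex.exp_ne_zero _)
      · exact h0
    by_cases hS : ∃ ℓ : ℤ, ∃ γ ∈ spectrum ℂ (A.map Complex.ofReal), γ ≠ μ ∧
        (μ - γ) * (T : ℂ) = 2 * Complex.I * Real.pi * ℓ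
    · -- aliased case: use the hypothesis
      have hmem : μ ∈ {lam ∈ spectrum ℂ (A.map Complex.ofReal) |
          ∃ ℓ : ℤ, ∃ γ ∈ spectrum ℂ (A.map Complex.ofReal), γ ≠ lam ∧
            (lam - γ) * (T : ℂ) = 2 * Complex.I * Real.pi * ℓ} := ⟨hμspec, hS⟩
      have hx1 : ((AdT.map Complex.ofReal)ᵀ - Complex.exp (μ * T) • 1).mulVec x = 0 := by
        rw [RH.sub_smul_one_mulVec]
        rw [show (AdT.map Complex.ofReal)ᵀ.mulVec x = z • x from heig, hzμ]
      have hx2 : ((intExp A T * B).map Complex.ofReal)ᵀ.mulVec x = 0 := by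
        rw [← hBdT]; exact hBd0
      exact hx0 (h μ hmem x hx1 hx2 hB0)
    · -- non-aliased case
      have halias : ∀ lam ∈ spectrum ℂ (RH.cmap A),
          Complex.exp (lam * T) = Complex.exp (μ * T) → lam = μ := by
        intro lam hlam hexp
        by_contra hne
        apply hS
        obtain ⟨k, hk⟩ := Complex.exp_eq_exp_iff_exists_int.mp hexp.symm
        exact ⟨k, lam, hlam, hne, by rw [sub_mul, hk]; push_cast; ring⟩
      have hAx : ((RH.cmap A)ᵀ).mulVec x = μ • x := by
        refine RH.ker_exp_eig (RH.cmap A) (ne_of_gt hT) μ halias x ?_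
        rw [← hzμ]; exact heig'
      exact hx0 (RH.hautus_easy A B hAB μ x hAx hB0)
end

section
/- Let (A,B) be a controllable pair and T > 0 be such that for all λ₁, λ₂ ∈ σ(A) with λ₁ ≠ λ₂ and all nonzero ℓ ∈ ℤ, (λ₁ - λ₂)T ≠ 2iπℓ. Then the pair (A_{d,T}, [B_{d,T}, B_{i,T}]) is controllable, where A_{d,T} = e^{AT}, B_{d,T} = (∫₀ᵀ e^{Aτ}dτ)B, B_{i,T} = e^{AT}B. -/
open Matrix

/- ------------------------------------------------------------------ -/
/- Auxiliary lemmas -/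

lemma rank_eq_iff_vecMul {K : Type*} [Field K] {n : ℕ} {J : Type*} [Fintype J]
    (M : Matrix (Fin n) J K) :
    M.rank = n ↔ ∀ v : Fin n → K, v ᵥ* M = 0 → v = 0 := by
  have hrn : Mᵀ.rank + Module.finrank K (LinearMap.ker Mᵀ.mulVecLin) = n := by
    have h := LinearMap.finrank_range_add_finrank_ker (Mᵀ.mulVecLin)
    simpa [Matrix.rank] using h
  have hmem : ∀ v : Fin n → K, v ᵥ* M = Mᵀ *ᵥ v := fun v => (Matrix.mulVec_transpose M v).symm
  rw [← Matrix.rank_transpose M]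
  constructor
  · intro h v hv
    have hker : Module.finrank K (LinearMap.ker Mᵀ.mulVecLin) = 0 := by omega
    have hbot : LinearMap.ker Mᵀ.mulVecLin = ⊥ := Submodule.finrank_eq_zero.mp hker
    have hv' : v ∈ LinearMap.ker Mᵀ.mulVecLin := by
      rw [LinearMap.mem_ker, Matrix.mulVecLin_apply, ← hmem]; exact hv
    rw [hbot] at hv'
    simpa using hv'
  · intro h
    have hbot : LinearMap.ker Mᵀ.mulVecLin = ⊥ := by
      ext v
      simp only [LinearMap.mem_ker, Matrix.mulVecLin_apply, Submodule.mem_bot]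
      exact ⟨fun hv => h v (by rw [hmem]; exact hv), fun hv => by simp [hv]⟩
    rw [hbot] at hrn
    simpa using hrn

lemma vecMul_map_re_im {n : ℕ} {J : Type*} [Fintype J] (M : Matrix (Fin n) J ℝ) (v : Fin n → ℂ)
    (h : v ᵥ* (M.map Complex.ofReal) = 0) :
    (fun i => (v i).re) ᵥ* M = 0 ∧ (fun i => (v i).im) ᵥ* M = 0 := by
  constructor <;> funext j <;>
  · have h1 := congrFun h j
    simp only [Matrix.vecMul, dotProduct, Matrix.map_apply, Pi.zero_apply] at h1 ⊢
    first
    | · have := congrArg Complex.re h1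
        simpa [Complex.re_sum, Complex.mul_re] using this
    | · have := congrArg Complex.im h1
        simpa [Complex.im_sum, Complex.mul_im] using this

lemma vecMul_map_coe {n : ℕ} {J : Type*} [Fintype J] (M : Matrix (Fin n) J ℝ) (v : Fin n → ℝ)
    (h : v ᵥ* M = 0) : (fun i => ((v i : ℂ))) ᵥ* (M.map Complex.ofReal) = 0 := by
  funext j
  have h1 := congrFun h j
  simp only [Matrix.vecMul, dotProduct, Matrix.map_apply, Pi.zero_apply] at h1 ⊢
  exact_mod_cast congrArg (Complex.ofReal) h1

lemma map_matpow {n : ℕ} (M : Matrix (Fin n) (Fin n) ℝ) (k : ℕ) :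
    (M ^ k).map Complex.ofReal = (M.map Complex.ofReal) ^ k := by
  induction k with
  | zero => simp [Matrix.map_one]
  | succ k ih =>
    rw [pow_succ, pow_succ, ← ih]
    ext i j
    simp [Matrix.mul_apply, Matrix.map_apply]

lemma map_matmul {n : ℕ} {J : Type*} [Fintype J] (P : Matrix (Fin n) (Fin n) ℝ)
    (Q : Matrix (Fin n) J ℝ) :
    (P * Q).map Complex.ofReal = P.map Complex.ofReal * Q.map Complex.ofReal := by
  ext i j
  simp [Matrix.mul_apply, Matrix.map_apply]

lemma exp_map_ofReal {n : ℕ} (M : Matrix (Fin n) (Fin n) ℝ) :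
    (NormedSpace.exp M).map Complex.ofReal = NormedSpace.exp (M.map Complex.ofReal) := by
  letI : SeminormedRing (Matrix (Fin n) (Fin n) ℝ) := Matrix.linftyOpSemiNormedRing
  letI : NormedRing (Matrix (Fin n) (Fin n) ℝ) := Matrix.linftyOpNormedRing
  letI : NormedAlgebra ℝ (Matrix (Fin n) (Fin n) ℝ) := Matrix.linftyOpNormedAlgebra
  letI : SeminormedRing (Matrix (Fin n) (Fin n) ℂ) := Matrix.linftyOpSemiNormedRing
  letI : NormedRing (Matrix (Fin n) (Fin n) ℂ) := Matrix.linftyOpNormedRing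
  letI : NormedAlgebra ℝ (Matrix (Fin n) (Fin n) ℂ) := Matrix.linftyOpNormedAlgebra
  have h1 : (NormedSpace.exp M).map Complex.ofReal = NormedSpace.exp (M.map Complex.ofReal) := by
    have hc : Continuous fun X : Matrix (Fin n) (Fin n) ℝ => X.map Complex.ofReal :=
      continuous_id.matrix_map Complex.continuous_ofReal
    letI : NormedAlgebra ℚ (Matrix (Fin n) (Fin n) ℝ) := Matrix.linftyOpNormedAlgebra
    exact NormedSpace.map_exp (Complex.ofRealHom.mapMatrix :
      Matrix (Fin n) (Fin n) ℝ →+* Matrix (Fin n) (Fin n) ℂ) hc M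
  exact h1

lemma exp_smul_one {n : ℕ} (c : ℂ) :
    NormedSpace.exp (c • (1 : Matrix (Fin n) (Fin n) ℂ))
      = Complex.exp c • (1 : Matrix (Fin n) (Fin n) ℂ) := by
  letI : SeminormedRing (Matrix (Fin n) (Fin n) ℂ) := Matrix.linftyOpSemiNormedRing
  letI : NormedRing (Matrix (Fin n) (Fin n) ℂ) := Matrix.linftyOpNormedRing
  letI : NormedAlgebra ℂ (Matrix (Fin n) (Fin n) ℂ) := Matrix.linftyOpNormedAlgebra
  have halg : ∀ z : ℂ, algebraMap ℂ (Matrix (Fin n) (Fin n) ℂ) z = z • 1 := fun z =>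
    (Algebra.algebraMap_eq_smul_one z)
  have hc : Continuous (algebraMap ℂ (Matrix (Fin n) (Fin n) ℂ)) := by
    have : Continuous fun z : ℂ => z • (1 : Matrix (Fin n) (Fin n) ℂ) :=
      continuous_id.smul continuous_const
    simpa [funext halg] using this
  rw [← halg]
  exact (NormedSpace.map_exp (algebraMap ℂ (Matrix (Fin n) (Fin n) ℂ)) hc c).symm.trans
    (by rw [halg, ← Complex.exp_eq_exp_ℂ])

lemma mulVec_mul_exp_eq {n : ℕ} (W M : Matrix (Fin n) (Fin n) ℂ) (x : Fin n → ℂ) :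
    (W * NormedSpace.exp M) *ᵥ x
      = ∑' (k : ℕ), (((Nat.factorial k : ℕ) : ℂ)⁻¹ • ((W * M ^ k) *ᵥ x)) := by
  letI : SeminormedRing (Matrix (Fin n) (Fin n) ℂ) := Matrix.linftyOpSemiNormedRing
  letI : NormedRing (Matrix (Fin n) (Fin n) ℂ) := Matrix.linftyOpNormedRing
  letI : NormedAlgebra ℂ (Matrix (Fin n) (Fin n) ℂ) := Matrix.linftyOpNormedAlgebra
  let φ : Matrix (Fin n) (Fin n) ℂ →ₗ[ℂ] (Fin n → ℂ) :=
    { toFun := fun X => (W * X) *ᵥ x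
      map_add' := by intro X Y; rw [mul_add, Matrix.add_mulVec]
      map_smul' := by intro c X; rw [mul_smul_comm, Matrix.smul_mulVec]; rfl }
  have hφ : Continuous φ := φ.continuous_of_finiteDimensional
  have hsum : Summable fun k : ℕ => ((Nat.factorial k : ℕ) : ℂ)⁻¹ • M ^ k :=
    NormedSpace.expSeries_summable' (𝕂 := ℂ) M
  have h1 : NormedSpace.exp M = ∑' (k : ℕ), ((Nat.factorial k : ℕ) : ℂ)⁻¹ • M ^ k := by
    rw [NormedSpace.exp_eq_tsum ℂ]
  calc (W * NormedSpace.exp M) *ᵥ x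
      = φ (∑' (k : ℕ), ((Nat.factorial k : ℕ) : ℂ)⁻¹ • M ^ k) := by rw [← h1]; rfl
    _ = ∑' (k : ℕ), φ (((Nat.factorial k : ℕ) : ℂ)⁻¹ • M ^ k) := by
        exact ((hsum.hasSum.map φ hφ).tsum_eq).symm
    _ = ∑' (k : ℕ), (((Nat.factorial k : ℕ) : ℂ)⁻¹ • ((W * M ^ k) *ᵥ x)) := by
        congr 1; funext k; rw [LinearMap.map_smul]; rfl

lemma eigen_of_exp_eigen {n : ℕ} (T : ℝ) (hT : T ≠ 0) (C : Matrix (Fin n) (Fin n) ℂ)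
    (lam mu : ℂ) (x : Fin n → ℂ) (hx : x ≠ 0) (K : ℕ)
    (hK : ((C - lam • 1) ^ K) *ᵥ x = 0)
    (hex : (NormedSpace.exp ((T : ℂ) • C)) *ᵥ x = mu • x) :
    mu = Complex.exp (T * lam) ∧ C *ᵥ x = lam • x := by
  classical
  set N : Matrix (Fin n) (Fin n) ℂ := C - lam • 1 with hN
  set E : Matrix (Fin n) (Fin n) ℂ := NormedSpace.exp ((T : ℂ) • N) with hE
  set e : ℂ := Complex.exp ((T : ℂ) * lam) with he
  have he0 : e ≠ 0 := Complex.exp_ne_zero _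
  have hCsum : C = lam • 1 + N := by rw [hN]; abel
  have hsplit : NormedSpace.exp ((T : ℂ) • C) = e • E := by
    have hTC : (T : ℂ) • C = ((T : ℂ) * lam) • (1 : Matrix (Fin n) (Fin n) ℂ) + (T : ℂ) • N := by
      rw [hCsum, smul_add, smul_smul]
    have hcomm : Commute (((T : ℂ) * lam) • (1 : Matrix (Fin n) (Fin n) ℂ)) ((T : ℂ) • N) :=
      ((Commute.one_left N).smul_left _).smul_right _
    rw [hTC, Matrix.exp_add_of_commute _ _ hcomm, exp_smul_one, he, smul_mul_assoc, one_mul]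
  set c : ℂ := mu / e with hc
  have hexN : E *ᵥ x = c • x := by
    have h1 : (e • E) *ᵥ x = mu • x := by rw [← hsplit]; exact hex
    rw [Matrix.smul_mulVec] at h1
    have := congrArg (fun z => e⁻¹ • z) h1
    simp only [smul_smul, inv_mul_cancel₀ he0, one_smul] at this
    rw [this, hc, div_eq_inv_mul]
  have hNpow : ∀ j, K ≤ j → N ^ j *ᵥ x = 0 := by
    intro j hj
    have : N ^ j = N ^ (j - K) * N ^ K := by rw [← pow_add]; congr 1; omega
    rw [this, ← Matrix.mulVec_mulVec, hK, Matrix.mulVec_zero]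
  have ky : ∀ y : Fin n → ℂ, N *ᵥ y = 0 → E *ᵥ y = y := by
    intro y hy
    have h := mulVec_mul_exp_eq 1 ((T : ℂ) • N) y
    rw [one_mul] at h
    rw [hE, h, tsum_eq_single 0 ?_]
    · simp
    · intro k hk
      have hk1 : 1 ≤ k := Nat.one_le_iff_ne_zero.mpr hk
      have : N ^ k *ᵥ y = 0 := by
        have : N ^ k = N ^ (k - 1) * N := by
          conv_lhs => rw [show k = (k - 1) + 1 by omega]
          rw [pow_succ]
        rw [this, ← Matrix.mulVec_mulVec, hy, Matrix.mulVec_zero]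
      rw [one_mul, smul_pow, Matrix.smul_mulVec, this]
      simp
  have step2 : ∀ j, 1 ≤ j → N ^ (j + 1) *ᵥ x = 0 →
      N ^ (j - 1) *ᵥ (E *ᵥ x) = N ^ (j - 1) *ᵥ x + ((T : ℂ) • (N ^ j *ᵥ x)) := by
    intro j hj hj1
    have h := mulVec_mul_exp_eq (N ^ (j - 1)) ((T : ℂ) • N) x
    have hterm : ∀ k : ℕ, (N ^ (j - 1) * ((T : ℂ) • N) ^ k) *ᵥ x
        = (T : ℂ) ^ k • (N ^ (j - 1 + k) *ᵥ x) := by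
      intro k
      rw [smul_pow, mul_smul_comm, Matrix.smul_mulVec, ← pow_add]
    have hvanish : ∀ k, 2 ≤ k → N ^ (j - 1 + k) *ᵥ x = 0 := by
      intro k hk
      have : N ^ (j - 1 + k) = N ^ (j - 1 + k - (j + 1)) * N ^ (j + 1) := by
        rw [← pow_add]; congr 1; omega
      rw [this, ← Matrix.mulVec_mulVec, hj1, Matrix.mulVec_zero]
    rw [Matrix.mulVec_mulVec, hE, h, tsum_eq_sum (s := {0, 1}) ?_]
    · rw [Finset.sum_pair (by norm_num)]
      simp only [hterm]
      rw [show j - 1 + 1 = j from by omega]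
      norm_num
    · intro k hk
      have hk2 : 2 ≤ k := by simp only [Finset.mem_insert, Finset.mem_singleton] at hk; omega
      rw [hterm, hvanish k hk2]
      simp
  have hex0 : ∃ k, N ^ k *ᵥ x = 0 := ⟨K, hNpow K le_rfl⟩
  set k₀ : ℕ := Nat.find hex0 with hk₀
  have hk₀spec : N ^ k₀ *ᵥ x = 0 := Nat.find_spec hex0
  have hk₀pos : 1 ≤ k₀ := by
    rcases Nat.eq_zero_or_pos k₀ with h0 | h; swap; · exact h
    exfalso; apply hx
    have := hk₀spec; rw [h0, pow_zero, Matrix.one_mulVec] at this; exact this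
  set y : Fin n → ℂ := N ^ (k₀ - 1) *ᵥ x with hy
  have hy0 : y ≠ 0 := by
    intro h
    exact Nat.find_min hex0 (show k₀ - 1 < k₀ by omega) h
  have hNy : N *ᵥ y = 0 := by
    rw [hy, Matrix.mulVec_mulVec, ← pow_succ']
    have : k₀ - 1 + 1 = k₀ := by omega
    rw [this]; exact hk₀spec
  have hc1 : c = 1 := by
    have hcom : N ^ (k₀ - 1) * E = E * N ^ (k₀ - 1) := by
      have hcm : Commute ((T : ℂ) • N) (N ^ (k₀ - 1)) :=
        ((Commute.refl N).pow_right _).smul_left _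
      exact ((hcm.exp_left).symm).eq
    have h1 : N ^ (k₀ - 1) *ᵥ (E *ᵥ x) = y := by
      rw [Matrix.mulVec_mulVec, hcom, ← Matrix.mulVec_mulVec]
      exact ky y hNy
    have h2 : N ^ (k₀ - 1) *ᵥ (E *ᵥ x) = c • y := by
      rw [hexN, Matrix.mulVec_smul, hy]
    have h3 : c • y = y := by rw [← h2, h1]
    have h4 : (c - 1) • y = 0 := by rw [sub_smul, h3, one_smul, sub_self]
    rcases smul_eq_zero.mp h4 with h | h
    · exact sub_eq_zero.mp h
    · exact absurd h hy0
  have hmu : mu = e := by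
    have : mu / e = 1 := by rw [← hc, hc1]
    exact (div_eq_one_iff_eq he0).mp this
  refine ⟨by rw [hmu, he], ?_⟩
  have hEx : E *ᵥ x = x := by rw [hexN, hc1, one_smul]
  have hdesc : ∀ i, ∀ j, 1 ≤ j → j + i = k₀ → N ^ j *ᵥ x = 0 := by
    intro i
    induction i with
    | zero =>
      intro j hj hjk
      have : j = k₀ := by omega
      rw [this]; exact hk₀spec
    | succ i ih =>
      intro j hj hjk
      have h1 : N ^ (j + 1) *ᵥ x = 0 := ih (j + 1) (by omega) (by omega)
      have h2 := step2 j hj h1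
      rw [hEx] at h2
      have h3 : (T : ℂ) • (N ^ j *ᵥ x) = 0 := by
        have := h2.symm
        rwa [add_eq_left] at this
      rcases smul_eq_zero.mp h3 with h | h
      · exact absurd (by exact_mod_cast h) hT
      · exact h
  have hNx : N *ᵥ x = 0 := by
    have := hdesc (k₀ - 1) 1 le_rfl (by omega)
    rwa [pow_one] at this
  have : (C - lam • 1) *ᵥ x = 0 := by rw [← hN]; exact hNx
  rw [Matrix.sub_mulVec, sub_eq_zero] at this
  rw [this, Matrix.smul_mulVec, Matrix.one_mulVec]

lemma vecMul_matrix_sum {K : Type*} [CommRing K] {n m' : ℕ} {ι : Type*} (s : Finset ι)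
    (f : ι → Matrix (Fin n) (Fin m') K) (v : Fin n → K) :
    v ᵥ* (∑ i ∈ s, f i) = ∑ i ∈ s, v ᵥ* f i := by
  classical
  induction s using Finset.induction_on with
  | empty => simp
  | insert _ _ h ih => rw [Finset.sum_insert h, Finset.sum_insert h, Matrix.vecMul_add, ih]

lemma vecMul_matrix_smul {K : Type*} [CommRing K] {n m' : ℕ} (c : K)
    (M : Matrix (Fin n) (Fin m') K) (v : Fin n → K) :
    v ᵥ* (c • M) = c • (v ᵥ* M) := by
  ext j
  simp only [Matrix.vecMul, dotProduct, Matrix.smul_apply, Pi.smul_apply, smul_eq_mul,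
    Finset.mul_sum]
  exact Finset.sum_congr rfl fun i _ => by ring

lemma vecMul_pow_all {K : Type*} [Field K] {n m' : ℕ} (F : Matrix (Fin n) (Fin n) K)
    (B : Matrix (Fin n) (Fin m') K) (v : Fin n → K)
    (h : ∀ k, k < n → v ᵥ* (F ^ k * B) = 0) : ∀ k, v ᵥ* (F ^ k * B) = 0 := by
  rcases Nat.eq_zero_or_pos n with h0 | hn0
  · intro k
    funext j
    subst h0
    simp [Matrix.vecMul, dotProduct]
  have hdeg : F.charpoly.natDegree = n := by simp
  have hFn : F ^ n = -∑ i ∈ Finset.range n, F.charpoly.coeff i • F ^ i := by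
    have h1 : (0 : Matrix (Fin n) (Fin n) K)
        = ∑ i ∈ Finset.range (n + 1), F.charpoly.coeff i • F ^ i := by
      rw [← F.aeval_self_charpoly, Polynomial.aeval_eq_sum_range, hdeg]
    rw [Finset.sum_range_succ] at h1
    have h2 := F.charpoly_monic.coeff_natDegree
    rw [hdeg] at h2
    rw [h2, one_smul] at h1
    linear_combination (norm := abel) -h1
  intro k
  induction k using Nat.strong_induction_on with
  | _ k ih =>
  by_cases hk : k < n
  · exact h k hk
  push_neg at hk
  have hkk : F ^ k = -∑ i ∈ Finset.range n, F.charpoly.coeff i • F ^ (k - n + i) := by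
    have h3 : F ^ k = F ^ (k - n) * F ^ n := by rw [← pow_add]; congr 1; omega
    rw [h3, hFn, mul_neg, Finset.mul_sum]
    congr 1
    refine Finset.sum_congr rfl fun i _ => ?_
    rw [mul_smul_comm, ← pow_add]
  rw [hkk, Matrix.neg_mul, Matrix.vecMul_neg, Matrix.sum_mul, vecMul_matrix_sum]
  have hz : ∀ i ∈ Finset.range n, v ᵥ* (F.charpoly.coeff i • F ^ (k - n + i) * B) = 0 := by
    intro i hi
    rw [Matrix.smul_mul, vecMul_matrix_smul, ih (k - n + i) (by simp at hi; omega)]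
    simp
  rw [Finset.sum_congr rfl hz]
  simp

lemma indep_finsupp_sum_zero {ι V : Type*} [AddCommGroup V] [Module ℂ V]
    {p : ι → Submodule ℂ V} (hp : iSupIndep p) (d : ι →₀ V) (hd : ∀ i, d i ∈ p i)
    (hsum : (d.sum fun _ x => x) = 0) : ∀ i, d i = 0 := by
  classical
  intro i
  by_cases hi : i ∈ d.support
  swap
  · exact Finsupp.notMem_support_iff.mp hi
  have h1 : d i + ∑ j ∈ d.support.erase i, d j = 0 := by
    rw [Finset.add_sum_erase _ _ hi]; exact hsum
  have h2 : d i ∈ ⨆ (j) (_ : j ≠ i), p j := by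
    have he : d i = -∑ j ∈ d.support.erase i, d j := by
      rw [eq_neg_iff_add_eq_zero]; exact h1
    rw [he]
    refine Submodule.neg_mem _ (Submodule.sum_mem _ fun j hj => ?_)
    have hji : j ≠ i := Finset.ne_of_mem_erase hj
    exact Submodule.mem_iSup_of_mem j (Submodule.mem_iSup_of_mem hji (hd j))
  exact Submodule.disjoint_def.mp (hp i) (d i) (hd i) h2

lemma mem_spectrum_of_eigen {n : ℕ} (Ac : Matrix (Fin n) (Fin n) ℂ) (l : ℂ) (x : Fin n → ℂ)
    (hx : x ≠ 0) (hax : Acᵀ *ᵥ x = l • x) : l ∈ spectrum ℂ Ac := by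
  rw [spectrum.mem_iff]
  intro hunit
  have hdet : IsUnit (algebraMap ℂ (Matrix (Fin n) (Fin n) ℂ) l - Ac).det :=
    (Matrix.isUnit_iff_isUnit_det _).mp hunit
  have hunitT : IsUnit (algebraMap ℂ (Matrix (Fin n) (Fin n) ℂ) l - Acᵀ) := by
    rw [Matrix.isUnit_iff_isUnit_det]
    have hTT : (algebraMap ℂ (Matrix (Fin n) (Fin n) ℂ) l - Acᵀ)
        = (algebraMap ℂ (Matrix (Fin n) (Fin n) ℂ) l - Ac)ᵀ := by
      rw [Matrix.transpose_sub]
      congr 1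
      rw [Algebra.algebraMap_eq_smul_one, Matrix.transpose_smul, Matrix.transpose_one]
    rw [hTT, Matrix.det_transpose]
    exact hdet
  have hMx : (algebraMap ℂ (Matrix (Fin n) (Fin n) ℂ) l - Acᵀ) *ᵥ x = 0 := by
    rw [Matrix.sub_mulVec, hax, Algebra.algebraMap_eq_smul_one, Matrix.smul_mulVec,
      Matrix.one_mulVec, sub_self]
  obtain ⟨u, hu⟩ := hunitT
  apply hx
  calc x = (1 : Matrix (Fin n) (Fin n) ℂ) *ᵥ x := (Matrix.one_mulVec x).symm
    _ = ((↑u⁻¹ * ↑u : Matrix (Fin n) (Fin n) ℂ)) *ᵥ x := by rw [u.inv_mul]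
    _ = (↑u⁻¹ : Matrix (Fin n) (Fin n) ℂ) *ᵥ ((↑u : Matrix (Fin n) (Fin n) ℂ) *ᵥ x) := by
        rw [Matrix.mulVec_mulVec]
    _ = 0 := by rw [hu, hMx, Matrix.mulVec_zero]

lemma key_lemma {n m' : ℕ} (T : ℝ) (hT : T ≠ 0)
    (Ac : Matrix (Fin n) (Fin n) ℂ) (Bc : Matrix (Fin n) (Fin m') ℂ)
    (hnp : ∀ l1 ∈ spectrum ℂ Ac, ∀ l2 ∈ spectrum ℂ Ac, l1 ≠ l2 →
      ∀ ℓ : ℤ, ℓ ≠ 0 → (l1 - l2) * (T : ℂ) ≠ 2 * Complex.I * (Real.pi : ℂ) * ℓ)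
    (hAB : ∀ u : Fin n → ℂ, (∀ k : ℕ, u ᵥ* (Ac ^ k * Bc) = 0) → u = 0) :
    ∀ v : Fin n → ℂ, (∀ k : ℕ, v ᵥ* (NormedSpace.exp ((T : ℂ) • Ac) ^ k * Bc) = 0) → v = 0 := by
  classical
  intro v hv
  by_contra hv0
  set F : Matrix (Fin n) (Fin n) ℂ := NormedSpace.exp ((T : ℂ) • Ac) with hF
  set U : Submodule ℂ (Fin n → ℂ) :=
    { carrier := {u | ∀ k : ℕ, u ᵥ* (F ^ k * Bc) = 0}
      add_mem' := fun ha hb k => by rw [Matrix.add_vecMul, ha k, hb k, add_zero]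
      zero_mem' := fun k => Matrix.zero_vecMul _
      smul_mem' := fun c a ha k => by rw [Matrix.smul_vecMul, ha k, smul_zero] } with hU
  have hvU : v ∈ U := hv
  haveI : Nontrivial U :=
    nontrivial_of_ne ⟨v, hvU⟩ 0 (fun h => hv0 (by simpa [Subtype.ext_iff] using h))
  set eF : (Fin n → ℂ) →ₗ[ℂ] (Fin n → ℂ) := Matrix.toLinAlgEquiv' Fᵀ with heF
  have hinv : ∀ u ∈ U, eF u ∈ U := by
    intro u hu k
    have h1 : eF u = u ᵥ* F := by
      rw [heF, Matrix.toLinAlgEquiv'_apply, Matrix.mulVec_transpose]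
    rw [h1, Matrix.vecMul_vecMul, ← Matrix.mul_assoc, ← pow_succ', hu (k + 1)]
  set g : Module.End ℂ U := eF.restrict hinv with hg
  obtain ⟨μ, hμ⟩ := Module.End.exists_eigenvalue g
  obtain ⟨xU, hxU⟩ := hμ.exists_hasEigenvector
  set w : Fin n → ℂ := (xU : Fin n → ℂ) with hw
  have hw0 : w ≠ 0 := by
    intro h
    exact hxU.2 (Subtype.ext h)
  have hwU : w ∈ U := xU.2
  have hFw : Fᵀ *ᵥ w = μ • w := by
    have h1 := hxU.apply_eq_smul
    have h2 := congrArg Subtype.val h1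
    rw [hg, LinearMap.restrict_coe_apply] at h2
    rw [← Matrix.toLinAlgEquiv'_apply Fᵀ w, ← heF]
    exact h2
  set C : Matrix (Fin n) (Fin n) ℂ := Acᵀ with hC
  have hFt : Fᵀ = NormedSpace.exp ((T : ℂ) • C) := by
    rw [hF, ← Matrix.exp_transpose, Matrix.transpose_smul]
  set f : Module.End ℂ (Fin n → ℂ) := Matrix.toLinAlgEquiv' C with hf
  have hconv : ∀ (l : ℂ) (k : ℕ), ((f - l • 1) ^ k : Module.End ℂ (Fin n → ℂ))
      = Matrix.toLinAlgEquiv' ((C - l • (1 : Matrix (Fin n) (Fin n) ℂ)) ^ k) := by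
    intro l k
    have h1 : (Matrix.toLinAlgEquiv' (n := Fin n) (R := ℂ)) (l • 1)
        = l • (1 : Module.End ℂ (Fin n → ℂ)) := by
      rw [← Algebra.algebraMap_eq_smul_one, AlgEquiv.commutes, Algebra.algebraMap_eq_smul_one]
    rw [map_pow, map_sub, h1]
  have hmemgen : ∀ (l : ℂ) (u : Fin n → ℂ), u ∈ f.genEigenspace l ⊤ ↔
      ∃ k : ℕ, ((C - l • (1 : Matrix (Fin n) (Fin n) ℂ)) ^ k) *ᵥ u = 0 := by
    intro l u
    rw [Module.End.mem_genEigenspace_top]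
    constructor
    · rintro ⟨k, hk⟩
      refine ⟨k, ?_⟩
      rw [LinearMap.mem_ker, hconv] at hk
      rw [← Matrix.toLinAlgEquiv'_apply]
      exact hk
    · rintro ⟨k, hk⟩
      refine ⟨k, ?_⟩
      rw [LinearMap.mem_ker, hconv]
      rw [← Matrix.toLinAlgEquiv'_apply] at hk
      exact hk
  have htop := Module.End.iSup_maxGenEigenspace_eq_top f
  have hwtop : w ∈ ⨆ l, f.maxGenEigenspace l := by rw [htop]; trivial
  obtain ⟨d, hd, hdsum⟩ := (Submodule.mem_iSup_iff_exists_finsupp _ w).mp hwtop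
  set S : Matrix (Fin n) (Fin n) ℂ := Fᵀ - μ • 1 with hS
  have hSw : S *ᵥ w = 0 := by
    rw [hS, Matrix.sub_mulVec, hFw, Matrix.smul_mulVec, Matrix.one_mulVec, sub_self]
  have hSd : ∀ l : ℂ, S *ᵥ d l ∈ f.maxGenEigenspace l := by
    intro l
    obtain ⟨k, hk⟩ := (hmemgen l (d l)).mp (hd l)
    refine (hmemgen l (S *ᵥ d l)).mpr ⟨k, ?_⟩
    have hcomm : (C - l • (1 : Matrix (Fin n) (Fin n) ℂ)) ^ k * S
        = S * (C - l • (1 : Matrix (Fin n) (Fin n) ℂ)) ^ k := by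
      have hc0 : Commute (C - l • (1 : Matrix (Fin n) (Fin n) ℂ)) ((T : ℂ) • C) :=
        ((Commute.refl C).sub_left ((Commute.one_left C).smul_left l)).smul_right _
      have hc1 : Commute (C - l • (1 : Matrix (Fin n) (Fin n) ℂ)) Fᵀ := by
        rw [hFt]; exact hc0.exp_right
      have hc2 : Commute (C - l • (1 : Matrix (Fin n) (Fin n) ℂ))
          (μ • (1 : Matrix (Fin n) (Fin n) ℂ)) :=
        (Commute.one_right _).smul_right μ
      exact ((hc1.sub_right hc2).pow_left k).eq
    rw [Matrix.mulVec_mulVec, hcomm, ← Matrix.mulVec_mulVec, hk, Matrix.mulVec_zero]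
  set d' : ℂ →₀ (Fin n → ℂ) := d.mapRange (fun y => S *ᵥ y) (Matrix.mulVec_zero S) with hd'
  have hd'sum : (d'.sum fun _ y => y) = 0 := by
    rw [hd', Finsupp.sum_mapRange_index (fun _ => rfl)]
    have hlin : (d.sum fun _ y => S *ᵥ y) = S *ᵥ (d.sum fun _ y => y) := by
      rw [Finsupp.sum, Finsupp.sum]
      induction d.support using Finset.induction_on with
      | empty => simp
      | insert _ _ h ih =>
        rw [Finset.sum_insert h, Finset.sum_insert h, Matrix.mulVec_add, ih]
    rw [hlin, hdsum, hSw]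
  have hcomp : ∀ l, S *ᵥ d l = 0 := by
    have hind := Module.End.independent_genEigenspace f (⊤ : ℕ∞)
    intro l
    have := indep_finsupp_sum_zero hind d'
      (fun i => by simpa [hd', Finsupp.mapRange_apply] using hSd i) hd'sum l
    simpa [hd', Finsupp.mapRange_apply] using this
  have heig : ∀ l ∈ d.support, μ = Complex.exp (T * l) ∧ C *ᵥ d l = l • d l := by
    intro l hl
    have hx0 : d l ≠ 0 := Finsupp.mem_support_iff.mp hl
    obtain ⟨k, hk⟩ := (hmemgen l (d l)).mp (hd l)
    have hexx : (NormedSpace.exp ((T : ℂ) • C)) *ᵥ d l = μ • d l := by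
      have h1 := hcomp l
      rw [hS, Matrix.sub_mulVec, Matrix.smul_mulVec, Matrix.one_mulVec, sub_eq_zero] at h1
      rw [← hFt]; exact h1
    exact eigen_of_exp_eigen T hT C l μ (d l) hx0 k hk hexx
  have hspec : ∀ l ∈ d.support, l ∈ spectrum ℂ Ac := by
    intro l hl
    exact mem_spectrum_of_eigen Ac l (d l) (Finsupp.mem_support_iff.mp hl)
      (by rw [← hC]; exact (heig l hl).2)
  have huniq : ∀ l1 ∈ d.support, ∀ l2 ∈ d.support, l1 = l2 := by
    intro l1 hl1 l2 hl2
    by_contra hne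
    have h1 : Complex.exp ((T : ℂ) * l1) = Complex.exp ((T : ℂ) * l2) := by
      rw [← (heig l1 hl1).1, ← (heig l2 hl2).1]
    have h2 : Complex.exp ((T : ℂ) * l1 - (T : ℂ) * l2) = 1 := by
      rw [Complex.exp_sub, h1, div_self (Complex.exp_ne_zero _)]
    obtain ⟨ℓ, hℓ⟩ := Complex.exp_eq_one_iff.mp h2
    have hℓ0 : ℓ ≠ 0 := by
      intro h0
      rw [h0] at hℓ
      simp only [Int.cast_zero, zero_mul] at hℓ
      apply hne
      have hTne : (T : ℂ) ≠ 0 := by exact_mod_cast hT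
      have := sub_eq_zero.mp hℓ
      exact mul_left_cancel₀ hTne this
    refine hnp l1 (hspec l1 hl1) l2 (hspec l2 hl2) hne ℓ hℓ0 ?_
    rw [show (l1 - l2) * (T : ℂ) = (T : ℂ) * l1 - (T : ℂ) * l2 by ring, hℓ]
    ring
  have hne : d.support.Nonempty := by
    rcases Finset.eq_empty_or_nonempty d.support with h | h
    · exfalso
      apply hw0
      rw [← hdsum, Finsupp.sum, h, Finset.sum_empty]
    · exact h
  obtain ⟨l₀, hl₀⟩ := hne
  have hsupp : d.support = {l₀} := by
    apply Finset.eq_singleton_iff_unique_mem.mpr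
    exact ⟨hl₀, fun x hx => huniq x hx l₀ hl₀⟩
  have hwd : w = d l₀ := by
    rw [← hdsum, Finsupp.sum, hsupp, Finset.sum_singleton]
  have hCw : C *ᵥ w = l₀ • w := by rw [hwd]; exact (heig l₀ hl₀).2
  have hCkw : ∀ k : ℕ, C ^ k *ᵥ w = l₀ ^ k • w := by
    intro k
    induction k with
    | zero => simp
    | succ k ih =>
      have hsplit : C ^ (k + 1) *ᵥ w = C *ᵥ (C ^ k *ᵥ w) := by
        rw [Matrix.mulVec_mulVec, ← pow_succ']
      rw [hsplit, ih, Matrix.mulVec_smul, hCw, smul_smul, ← pow_succ]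
  have hwB : w ᵥ* Bc = 0 := by
    have := hwU 0
    rwa [pow_zero, Matrix.one_mul] at this
  apply hw0
  apply hAB
  intro k
  have h1 : w ᵥ* Ac ^ k = l₀ ^ k • w := by
    rw [← Matrix.mulVec_transpose, Matrix.transpose_pow, ← hC]
    exact hCkw k
  rw [← Matrix.vecMul_vecMul, h1, Matrix.smul_vecMul, hwB, smul_zero]

lemma vecMul_ctrbMat_apply {n : ℕ} {J : Type*} [Fintype J] (F : Matrix (Fin n) (Fin n) ℝ)
    (G : Matrix (Fin n) J ℝ) (v : Fin n → ℝ) (p : Fin n × J) :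
    (v ᵥ* ctrbMat F G) p = (v ᵥ* (F ^ (p.1 : ℕ) * G)) p.2 := rfl

/-- Non-pathological sampling: if `(A,B)` is controllable, `T > 0`, and no two
distinct eigenvalues of `A` differ by a nonzero integer multiple of `2iπ/T`,
then the MRI sampled pair `(A_{d,T}, [B_{d,T}, B_{i,T}])` is controllable. -/
theorem stmt_9 (n m : ℕ) (A : Matrix (Fin n) (Fin n) ℝ) (B : Matrix (Fin n) (Fin m) ℝ)
    (hAB : Controllable A B) (T : ℝ) (hT : 0 < T)
    (hnp : ∀ lam1 ∈ spectrum ℂ (A.map Complex.ofReal),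
      ∀ lam2 ∈ spectrum ℂ (A.map Complex.ofReal), lam1 ≠ lam2 →
      ∀ ℓ : ℤ, ℓ ≠ 0 → (lam1 - lam2) * (T : ℂ) ≠ 2 * Complex.I * Real.pi * ℓ) :
    Controllable (NormedSpace.exp (T • A))
      (Matrix.fromCols (intExp A T * B) (NormedSpace.exp (T • A) * B)) := by
  classical
  unfold Controllable
  rw [rank_eq_iff_vecMul]
  intro v hvc
  set F : Matrix (Fin n) (Fin n) ℝ := NormedSpace.exp (T • A) with hFdef
  set Ac : Matrix (Fin n) (Fin n) ℂ := A.map Complex.ofReal with hAc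
  set Bc : Matrix (Fin n) (Fin m) ℂ := B.map Complex.ofReal with hBc
  -- the complexified exponential
  have hFc : F.map Complex.ofReal = NormedSpace.exp ((T : ℂ) • Ac) := by
    have hsm : (T • A).map Complex.ofReal = (T : ℂ) • Ac := by
      ext i j
      simp [Matrix.map_apply, Matrix.smul_apply, Complex.ofReal_mul, hAc]
    rw [hFdef, exp_map_ofReal, hsm]
  -- step 1 : v annihilates the second block columns
  have hv1 : ∀ k, k < n → v ᵥ* (F ^ k * (F * B)) = 0 := by
    intro k hk
    funext j
    have h := congrFun hvc (⟨k, hk⟩, Sum.inr j)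
    rw [vecMul_ctrbMat_apply] at h
    have hcol : (F ^ k * Matrix.fromCols (intExp A T * B) (F * B))
        = Matrix.fromCols (F ^ k * (intExp A T * B)) (F ^ k * (F * B)) :=
      Matrix.mul_fromCols _ _ _
    rw [hcol] at h
    have : (v ᵥ* Matrix.fromCols (F ^ (k : ℕ) * (intExp A T * B)) (F ^ (k : ℕ) * (F * B)))
        (Sum.inr j) = (v ᵥ* (F ^ (k : ℕ) * (F * B))) j := by
      simp [Matrix.vecMul, dotProduct, Matrix.fromCols]
    rw [this] at h
    simpa using h
  -- step 2 : pass to u := v ᵥ* F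
  set u : Fin n → ℝ := v ᵥ* F with hu
  have hv2 : ∀ k, k < n → u ᵥ* (F ^ k * B) = 0 := by
    intro k hk
    rw [hu, Matrix.vecMul_vecMul, ← Matrix.mul_assoc]
    have hcomm : F * F ^ k = F ^ k * F := (Commute.refl F).pow_right k |>.eq
    rw [hcomm, Matrix.mul_assoc]
    exact hv1 k hk
  have hv3 : ∀ k, u ᵥ* (F ^ k * B) = 0 := vecMul_pow_all F B u hv2
  -- step 3 : complexify
  set uc : Fin n → ℂ := fun i => ((u i : ℂ)) with huc
  have hv4 : ∀ k : ℕ, uc ᵥ* (NormedSpace.exp ((T : ℂ) • Ac) ^ k * Bc) = 0 := by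
    intro k
    have h := vecMul_map_coe (F ^ k * B) u (hv3 k)
    rw [map_matmul, map_matpow, hFc] at h
    exact h
  -- the complex controllability hypothesis
  have hABc : ∀ w : Fin n → ℂ, (∀ k : ℕ, w ᵥ* (Ac ^ k * Bc) = 0) → w = 0 := by
    intro w hw
    have hreim : ∀ k : ℕ, (fun i => (w i).re) ᵥ* (A ^ k * B) = 0 ∧
        (fun i => (w i).im) ᵥ* (A ^ k * B) = 0 := by
      intro k
      apply vecMul_map_re_im
      rw [map_matmul, map_matpow]
      exact hw k
    have hre : (fun i => (w i).re) ᵥ* ctrbMat A B = 0 := by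
      funext p
      rw [vecMul_ctrbMat_apply]
      exact congrFun (hreim (p.1 : ℕ)).1 p.2
    have him : (fun i => (w i).im) ᵥ* ctrbMat A B = 0 := by
      funext p
      rw [vecMul_ctrbMat_apply]
      exact congrFun (hreim (p.1 : ℕ)).2 p.2
    have hAB' := (rank_eq_iff_vecMul (ctrbMat A B)).mp hAB
    have h1 := hAB' _ hre
    have h2 := hAB' _ him
    funext i
    have e1 : (w i).re = 0 := congrFun h1 i
    have e2 : (w i).im = 0 := congrFun h2 i
    exact Complex.ext e1 e2
  -- apply the key lemma
  have huc0 : uc = 0 := key_lemma T (ne_of_gt hT) Ac Bc hnp hABc uc hv4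
  have hu0 : u = 0 := by
    funext i
    have h3 : ((u i : ℝ) : ℂ) = 0 := by simpa [huc] using congrFun huc0 i
    have h4 : u i = 0 := by exact_mod_cast h3
    simpa using h4
  -- conclude using invertibility of the exponential
  have hFE : F * NormedSpace.exp (-(T • A)) = 1 := by
    have h := Matrix.exp_add_of_commute (T • A) (-(T • A)) ((Commute.refl _).neg_right)
    rw [add_neg_cancel, NormedSpace.exp_zero] at h
    exact h.symm
  calc v = v ᵥ* 1 := (Matrix.vecMul_one v).symm
    _ = (v ᵥ* F) ᵥ* NormedSpace.exp (-(T • A)) := by rw [Matrix.vecMul_vecMul, hFE]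
    _ = 0 := by rw [← hu, hu0, Matrix.zero_vecMul]
end
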